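/- Let 𝒳 be a category and let E^𝒳 : 𝒳 ⥤ Diag°(𝒳) be the full embedding sending an object x to the pair (𝟙-category, Δx), where 𝟙-category is the terminal (one-object, one-morphism) small category and Δx is the constant functor at x, and sending f : x → y to (identity functor, constant natural transformation at f). Then 𝒳 is cocomplete if and only if E^𝒳 has a left adjoint; moreover, when 𝒳 is cocomplete, a left adjoint is given on objects by (I, X) ↦ colim X. -/

import Mathlib

open CategoryTheory

universe v u

namespace DiagPaper

variable (𝒳 : Type u) [Category.{v} 𝒳]

/-- An object of the diagram category `Diag°(𝒳)`: a small category together with a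
diagram of that shape in `𝒳`. -/
structure DiagObj : Type (max u (v + 1)) where
  shape : Cat.{v, v}
  diag : shape ⥤ 𝒳

variable {𝒳}

/-- A morphism `(F, φ) : (I, X) ⟶ (J, Y)` in `Diag°(𝒳)`. -/
structure DiagHom (A B : DiagObj 𝒳) : Type v where
  F : A.shape ⥤ B.shape
  φ : A.diag ⟶ F ⋙ B.diag

theorem DiagHom.ext' {A B : DiagObj 𝒳} {f g : DiagHom A B}
    (hF : f.F = g.F) (hφ : HEq f.φ g.φ) : f = g := by
  cases f; cases g
  dsimp only at hF hφ
  subst hF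
  rw [eq_of_heq hφ]

instance : Category (DiagObj 𝒳) where
  Hom := DiagHom
  id A := ⟨𝟭 A.shape, 𝟙 A.diag⟩
  comp f g := ⟨f.F ⋙ g.F, f.φ ≫ Functor.whiskerLeft f.F g.φ⟩
  id_comp f := DiagHom.ext' (Functor.id_comp _) (by
    apply heq_of_eq
    ext i
    simp)
  comp_id f := DiagHom.ext' (Functor.comp_id _) (by
    apply heq_of_eq
    ext i
    simp)
  assoc f g h := DiagHom.ext' (Functor.assoc _ _ _) (by
    apply heq_of_eq
    ext i
    simp)

@[simp] theorem DiagObj.comp_F {A B C : DiagObj 𝒳} (f : A ⟶ B) (g : B ⟶ C) :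
    (f ≫ g).F = f.F ⋙ g.F := rfl

@[simp] theorem DiagObj.comp_φ {A B C : DiagObj 𝒳} (f : A ⟶ B) (g : B ⟶ C) :
    (f ≫ g).φ = f.φ ≫ Functor.whiskerLeft f.F g.φ := rfl

@[simp] theorem DiagObj.id_F (A : DiagObj 𝒳) : (𝟙 A : DiagHom A A).F = 𝟭 A.shape := rfl

@[simp] theorem DiagObj.id_φ (A : DiagObj 𝒳) : (𝟙 A : DiagHom A A).φ = 𝟙 A.diag := rfl

variable (𝒳)

/-- The forgetful functor `D^𝒳 : Diag°(𝒳) ⥤ Cat`. -/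
def Dfunctor : DiagObj 𝒳 ⥤ Cat.{v, v} where
  obj A := A.shape
  map f := f.F.toCatHom


/-- The full embedding `E^𝒳 : 𝒳 ⥤ Diag°(𝒳)`, sending an object `x` to the pair
(terminal category, constant functor at `x`) and `f : x ⟶ y` to (identity functor,
constant natural transformation at `f`). -/
def Ediag : 𝒳 ⥤ DiagObj 𝒳 where
  obj x := ⟨Cat.of (Discrete PUnit.{v + 1}), (Functor.const _).obj x⟩
  map f := ⟨𝟭 _, (Functor.const _).map f⟩
  map_id x := DiagHom.ext' rfl (by apply heq_of_eq; ext i; simp <;> rfl)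
  map_comp f g := DiagHom.ext' rfl (by apply heq_of_eq; ext i; simp <;> rfl)


section Aux

open Limits

instance : Subsingleton (Discrete PUnit.{v + 1}) := ⟨by rintro ⟨⟨⟩⟩ ⟨⟨⟩⟩; rfl⟩

lemma toPUnit_ext {C : Type*} [Category C] (F G : C ⥤ Discrete PUnit.{v + 1}) : F = G :=
  CategoryTheory.Functor.ext (fun _ => Subsingleton.elim _ _) (fun _ _ _ => Subsingleton.elim _ _)

variable {𝒳}

lemma hom_toE_ext {A : DiagObj 𝒳} {x : 𝒳} {g h : A ⟶ (Ediag 𝒳).obj x}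
    (w : ∀ i, (g.φ.app i : A.diag.obj i ⟶ x) = h.φ.app i) : g = h := by
  obtain ⟨F, φ⟩ := g; obtain ⟨G, ψ⟩ := h
  obtain rfl : F = G := toPUnit_ext F G
  congr 1
  ext i
  exact w i

lemma hom_toE_congr {A : DiagObj 𝒳} {x : 𝒳} {g h : A ⟶ (Ediag 𝒳).obj x}
    (e : g = h) (i : A.shape) : (g.φ.app i : A.diag.obj i ⟶ x) = h.φ.app i := by
  subst e; rfl

/-- The cocone on `A.diag` determined by a morphism `A ⟶ E x`. -/
def coconeOf {A : DiagObj 𝒳} {x : 𝒳} (g : A ⟶ (Ediag 𝒳).obj x) : Cocone A.diag where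
  pt := x
  ι := { app := fun i => g.φ.app i
         naturality := fun i j f => by
           have := g.φ.naturality f
           dsimp [Ediag] at this ⊢
           simp [this]; exact Category.comp_id _ }

variable (𝒳)

/-- The colimit functor `Diag°(𝒳) ⥤ 𝒳`. -/
noncomputable def Lfun [HasColimits 𝒳] : DiagObj 𝒳 ⥤ 𝒳 where
  obj A := colimit A.diag
  map f := colimMap f.φ ≫ colimit.pre _ f.F
  map_id A := by
    apply colimit.hom_ext; intro j; simp
  map_comp f g := by
    apply colimit.hom_ext; intro j; simp

/-- The adjunction `Lfun ⊣ Ediag`. -/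
noncomputable def adjL [HasColimits 𝒳] : Lfun 𝒳 ⊣ Ediag 𝒳 :=
  Adjunction.mkOfHomEquiv
    { homEquiv := fun A x =>
        { toFun := fun f =>
            ⟨Functor.star _,
             { app := fun i => colimit.ι A.diag i ≫ f
               naturality := fun i j u => by
                 dsimp [Ediag]
                 change A.diag.map u ≫ colimit.ι A.diag j ≫ f = (colimit.ι A.diag i ≫ f) ≫ 𝟙 x
                 exact ((Category.assoc _ _ _).symm.trans (congrArg (· ≫ f) (colimit.w A.diag u))).trans (Category.comp_id _).symm }⟩
          invFun := fun g => colimit.desc A.diag (coconeOf g)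
          left_inv := fun f => by
            apply colimit.hom_ext; intro j
            simp [coconeOf]; rfl
          right_inv := fun g => by
            apply hom_toE_ext; intro i
            simp [coconeOf]; exact colimit.ι_desc _ _ }
      homEquiv_naturality_left_symm := fun f g => by
        apply colimit.hom_ext; intro j
        refine (colimit.ι_desc _ _).trans ?_
        simp [coconeOf, Lfun]
        exact congrArg (f.φ.app j ≫ ·) (colimit.ι_desc (coconeOf g) _).symm
      homEquiv_naturality_right := fun f g => by
        apply hom_toE_ext; intro i
        exact (Category.assoc _ _ _).symm }

lemma hasColimits_of_isRightAdjoint (h : (Ediag 𝒳).IsRightAdjoint) :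
    HasColimits 𝒳 := by
  obtain ⟨L, ⟨adj⟩⟩ := h
  constructor; intro J hJ; constructor; intro X
  let A : DiagObj 𝒳 := ⟨Cat.of J, X⟩
  let homOf : ∀ (s : Cocone X), A ⟶ (Ediag 𝒳).obj s.pt := fun s =>
    ⟨Functor.star _,
     { app := fun i => s.ι.app i
       naturality := fun i j f => by
         dsimp [Ediag, A]
         simp [s.ι.naturality f]; rfl }⟩
  let c : Cocone X :=
    { pt := L.obj A
      ι := { app := fun i => (adj.unit.app A).φ.app i
             naturality := fun i j f => by
               have := (adj.unit.app A).φ.naturality f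
               dsimp [Ediag, A] at this ⊢
               simp [this]; exact Category.comp_id _ } }
  refine HasColimit.mk ⟨c, ?_⟩
  refine
    { desc := fun s => (adj.homEquiv A s.pt).symm (homOf s)
      fac := fun s j => ?_
      uniq := fun s m w => ?_ }
  · have h1 := (adj.homEquiv A s.pt).apply_symm_apply (homOf s)
    rw [adj.homEquiv_unit] at h1
    have h2 := hom_toE_congr h1 j
    dsimp [Ediag, homOf, c] at h2 ⊢
    exact h2
  · show m = (adj.homEquiv A s.pt).symm (homOf s)
    apply (adj.homEquiv A s.pt).injective
    rw [Equiv.apply_symm_apply, adj.homEquiv_unit]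
    apply hom_toE_ext; intro i
    have := w i
    dsimp [Ediag, homOf, c] at this ⊢
    exact this

end Aux

/-- **Peschke–Tholen, Proposition 2.3(1).**  A category `𝒳` is (functorially) cocomplete
if and only if the embedding `E^𝒳 : 𝒳 ⥤ Diag°(𝒳)` has a left adjoint; when `𝒳` is
cocomplete, a left adjoint is given on objects by `(I, X) ↦ colim X`. -/
theorem cocomplete_iff_Ediag_hasLeftAdjoint (𝒳 : Type u) [Category.{v} 𝒳] :
    (Limits.HasColimits 𝒳 ↔ (Ediag 𝒳).IsRightAdjoint) ∧
    (∀ [Limits.HasColimits 𝒳], ∃ (L : DiagObj 𝒳 ⥤ 𝒳) (_ : L ⊣ Ediag 𝒳),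
      ∀ A : DiagObj 𝒳, L.obj A = Limits.colimit A.diag) := by
  refine ⟨⟨fun h => ⟨Lfun 𝒳, ⟨adjL 𝒳⟩⟩, fun h => hasColimits_of_isRightAdjoint 𝒳 h⟩, ?_⟩
  intro h
  exact ⟨Lfun 𝒳, adjL 𝒳, fun A => rfl⟩


end DiagPaper
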